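/- Let n and p be positive integers and let A be a finite set of integers consisting of exactly n negative integers, exactly p positive integers, and 0. If α is an integer with 0 ≤ α ≤ n + p + 1, α ≤ n, and α ≤ p, then |Σ_α(A)| ≥ n(n+1)/2 + p(p+1)/2 + 1. -/

import Mathlib

/-! Let `b` be the largest positive element of `A` and `N` the sum of its negative elements.
Adding `b` to the subsets counted in `Σ_{α-1}(A \ {b})` gives sums `≥ N + b`, while `N` and the
sums `N + c` over the other positive `c` are `< N + b` and use at least `n ≥ α` elements. Hence
`|Σ_α(A)| ≥ p + |Σ_{α-1}(A \ {b})|`, and stripping the positive elements one at a time gives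
`|Σ_α(A)| ≥ p(p+1)/2 + |Σ_{α-p}(A⁻)|` with `A⁻` the nonpositive part and `α - p = 0`. The mirror
image under `x ↦ -x` of the same bound, for `α = 0`, gives `|Σ_0(A⁻)| ≥ n(n+1)/2 + 1`. -/

/-- `sigmaAtLeast A α` is the set of all subset sums of `A` coming from
subsets of size at least `α`. -/
def sigmaAtLeast (A : Finset ℤ) (α : ℕ) : Finset ℤ :=
  (A.powerset.filter (fun B => α ≤ B.card)).image (fun B => B.sum id)

open Finset

theorem mem_sigmaAtLeast {A : Finset ℤ} {α : ℕ} {x : ℤ} :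
    x ∈ sigmaAtLeast A α ↔ ∃ B ⊆ A, α ≤ #B ∧ B.sum id = x := by
  simp [sigmaAtLeast, and_assoc]

theorem sum_mem_sigmaAtLeast {A B : Finset ℤ} {α : ℕ} (hB : B ⊆ A) (hα : α ≤ #B) :
    B.sum id ∈ sigmaAtLeast A α :=
  mem_sigmaAtLeast.2 ⟨B, hB, hα, rfl⟩

theorem sigmaAtLeast_zero_nonempty (A : Finset ℤ) : (sigmaAtLeast A 0).Nonempty :=
  ⟨_, sum_mem_sigmaAtLeast (empty_subset A) le_rfl⟩

theorem sum_filter_neg_le_sum {A B : Finset ℤ} (hB : B ⊆ A) :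
    (A.filter (· < 0)).sum id ≤ B.sum id :=
  calc (A.filter (· < 0)).sum id
      ≤ (B.filter (· < 0)).sum id := by
        have := sum_le_sum_of_subset_of_nonneg (f := fun x => -x) (filter_subset_filter _ hB)
          (fun x hx _ => neg_nonneg.2 (le_of_lt (mem_filter.1 hx).2))
        rwa [sum_neg_distrib, sum_neg_distrib, neg_le_neg_iff] at this
    _ ≤ B.sum id := sum_le_sum_of_subset_of_nonneg (filter_subset _ B)
        (fun x hxB hx => not_lt.1 fun hneg => hx (mem_filter.2 ⟨hxB, hneg⟩))

theorem filter_neg_filter_nonpos (A : Finset ℤ) :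
    (A.filter (· ≤ 0)).filter (· < 0) = A.filter (· < 0) := by
  rw [filter_filter]
  exact filter_congr fun x _ => and_iff_right_of_imp fun h => h.le

theorem sum_map_neg (B : Finset ℤ) : (B.map (Equiv.neg ℤ).toEmbedding).sum id = -B.sum id := by
  rw [sum_map, ← sum_neg_distrib]
  rfl

theorem sigmaAtLeast_map_neg (A : Finset ℤ) (α : ℕ) :
    sigmaAtLeast (A.map (Equiv.neg ℤ).toEmbedding) α =
      (sigmaAtLeast A α).map (Equiv.neg ℤ).toEmbedding := by
  ext x
  simp only [mem_sigmaAtLeast, subset_map_iff, mem_map_equiv, Equiv.neg_symm, Equiv.neg_apply]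
  constructor
  · rintro ⟨_, ⟨B, hB, rfl⟩, hα, hsum⟩
    exact ⟨B, hB, by rwa [card_map] at hα, by rw [← hsum, sum_map_neg, neg_neg]⟩
  · rintro ⟨B, hB, hα, hsum⟩
    exact ⟨_, ⟨B, hB, rfl⟩, by rwa [card_map], by rw [sum_map_neg, hsum, neg_neg]⟩

theorem filter_pos_map_neg (A : Finset ℤ) :
    (A.map (Equiv.neg ℤ).toEmbedding).filter (0 < ·) =
      (A.filter (· < 0)).map (Equiv.neg ℤ).toEmbedding := by
  rw [filter_map]
  congr 1
  exact filter_congr fun x _ => by simp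

theorem card_add_card_sigmaAtLeast_le_insert {Z P : Finset ℤ} {b : ℤ} {α : ℕ}
    (hP : ∀ x ∈ P, 0 < x) (hPb : ∀ x ∈ P, x < b) (hb : 0 < b) (hbZ : b ∉ Z)
    (hα : α ≤ #(Z.filter (· < 0))) :
    #P + 1 + #(sigmaAtLeast (Z ∪ P) (α - 1)) ≤ #(sigmaAtLeast (Z ∪ insert b P) α) := by
  set Neg := Z.filter (· < 0)
  set N := Neg.sum id
  have hNeg : Neg ⊆ Z ∪ insert b P := (filter_subset _ Z).trans subset_union_left
  set low := insert N (P.image (N + ·))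
  set high := (sigmaAtLeast (Z ∪ P) (α - 1)).image (b + ·)
  have hlow : ∀ x ∈ low, x ∈ sigmaAtLeast (Z ∪ insert b P) α ∧ x < N + b := by
    simp only [low, mem_insert, mem_image]
    rintro x (rfl | ⟨c, hc, rfl⟩)
    · exact ⟨sum_mem_sigmaAtLeast hNeg hα, by linarith⟩
    · have hcNeg : c ∉ Neg := fun h => (mem_filter.1 h).2.not_gt (hP c hc)
      refine ⟨?_, by linarith [hPb c hc]⟩
      rw [add_comm, ← id_eq c, ← sum_insert hcNeg]
      refine sum_mem_sigmaAtLeast (insert_subset ?_ hNeg) ?_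
      · exact mem_union_right _ (mem_insert_of_mem hc)
      · rw [card_insert_of_notMem hcNeg]; omega
  have hhigh : ∀ x ∈ high, x ∈ sigmaAtLeast (Z ∪ insert b P) α ∧ N + b ≤ x := by
    simp only [high, mem_image]
    rintro _ ⟨_, hy, rfl⟩
    obtain ⟨B, hB, hαB, rfl⟩ := mem_sigmaAtLeast.1 hy
    have hbB : b ∉ B := fun h => (mem_union.1 (hB h)).elim hbZ fun h => (hPb b h).false
    have hnegZP : (Z ∪ P).filter (· < 0) = Neg := by
      rw [filter_union, filter_false_of_mem fun x hx => (hP x hx).not_gt, union_empty]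
    refine ⟨?_, by linarith [hnegZP ▸ sum_filter_neg_le_sum hB]⟩
    rw [← id_eq b, ← sum_insert hbB]
    refine sum_mem_sigmaAtLeast (insert_subset ?_ ?_) ?_
    · exact mem_union_right _ (mem_insert_self b P)
    · exact hB.trans (union_subset_union subset_rfl (subset_insert b P))
    · rw [card_insert_of_notMem hbB]; omega
  have hlow_card : #low = #P + 1 := by
    rw [card_insert_of_notMem, card_image_of_injective _ (add_right_injective N)]
    simp only [mem_image, add_eq_left, not_exists, not_and]
    exact fun c hc => (hP c hc).ne'
  have hdisj : Disjoint low high :=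
    disjoint_left.2 fun x hl hh => ((hlow x hl).2.trans_le (hhigh x hh).2).false
  calc #P + 1 + #(sigmaAtLeast (Z ∪ P) (α - 1))
      = #(low ∪ high) := by
        rw [card_union_of_disjoint hdisj, hlow_card,
          card_image_of_injective _ (add_right_injective b)]
    _ ≤ _ := card_le_card (union_subset (fun x hx => (hlow x hx).1) fun x hx => (hhigh x hx).1)

theorem choose_add_card_sigmaAtLeast_le_union {Z P : Finset ℤ} {α : ℕ}
    (hZ : ∀ z ∈ Z, z ≤ 0) (hP : ∀ x ∈ P, 0 < x) (hα : α ≤ #(Z.filter (· < 0))) :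
    (#P + 1).choose 2 + #(sigmaAtLeast Z (α - #P)) ≤ #(sigmaAtLeast (Z ∪ P) α) := by
  induction P using Finset.induction_on_max generalizing α with
  | empty => simp
  | insert b P hPb ih =>
    have hb : 0 < b := hP b (mem_insert_self b P)
    have hbP : b ∉ P := fun h => (hPb b h).false
    have hstep := card_add_card_sigmaAtLeast_le_insert (fun x hx => hP x (mem_insert_of_mem hx))
      hPb hb (fun h => (hZ b h).not_gt hb) hα
    have hih := ih (fun x hx => hP x (mem_insert_of_mem hx)) (α := α - 1) (by omega)
    have hchoose : (#P + 1 + 1).choose 2 = (#P + 1).choose 2 + (#P + 1) := by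
      rw [Nat.choose_succ_succ, Nat.choose_one_right, add_comm]
    rw [Nat.sub_sub, add_comm 1] at hih
    rw [card_insert_of_notMem hbP, hchoose]
    omega

theorem choose_add_card_sigmaAtLeast_le (A : Finset ℤ) {α : ℕ}
    (hα : α ≤ #(A.filter (· < 0))) :
    (#(A.filter (0 < ·)) + 1).choose 2 +
        #(sigmaAtLeast (A.filter (· ≤ 0)) (α - #(A.filter (0 < ·)))) ≤
      #(sigmaAtLeast A α) := by
  have hA : A.filter (· ≤ 0) ∪ A.filter (0 < ·) = A := by
    simpa only [not_le] using filter_union_filter_not_eq (· ≤ 0) A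
  have := choose_add_card_sigmaAtLeast_le_union (Z := A.filter (· ≤ 0)) (P := A.filter (0 < ·))
    (fun z hz => (mem_filter.1 hz).2) (fun x hx => (mem_filter.1 hx).2)
    ((filter_neg_filter_nonpos A).symm ▸ hα)
  rwa [hA] at this

theorem choose_add_one_le_card_sigmaAtLeast_zero (A : Finset ℤ) :
    (#(A.filter (· < 0)) + 1).choose 2 + 1 ≤ #(sigmaAtLeast A 0) := by
  have h := choose_add_card_sigmaAtLeast_le (A.map (Equiv.neg ℤ).toEmbedding) (Nat.zero_le _)
  rw [sigmaAtLeast_map_neg, card_map, filter_pos_map_neg, card_map, Nat.zero_sub] at h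
  exact (Nat.add_le_add_left (sigmaAtLeast_zero_nonempty _).card_pos _).trans h

theorem stmt_7_general (n p α : ℕ) (A : Finset ℤ)
    (hneg : (A.filter (fun x => x < 0)).card = n)
    (hpos : (A.filter (fun x => 0 < x)).card = p)
    (hαn : α ≤ n) (hαp : α ≤ p) :
    ((sigmaAtLeast A α).card : ℤ) ≥
      (n : ℤ) * ((n : ℤ) + 1) / 2 + (p : ℤ) * ((p : ℤ) + 1) / 2 + 1 := by
  have hpos_side := choose_add_card_sigmaAtLeast_le A (hneg ▸ hαn)
  rw [hpos, Nat.sub_eq_zero_of_le hαp] at hpos_side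
  have hneg_side := choose_add_one_le_card_sigmaAtLeast_zero (A.filter (· ≤ 0))
  rw [filter_neg_filter_nonpos, hneg] at hneg_side
  have triangle (m : ℕ) : (((m + 1).choose 2 : ℕ) : ℤ) = m * (m + 1) / 2 := by
    rw [Nat.choose_two_right]
    push_cast
    ring_nf
  rw [ge_iff_le, ← triangle n, ← triangle p]
  omega

theorem stmt_7 (n p α : ℕ) (hn : 1 ≤ n) (hp : 1 ≤ p) (A : Finset ℤ)
    (hneg : (A.filter (fun x => x < 0)).card = n)
    (hpos : (A.filter (fun x => 0 < x)).card = p)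
    (h0 : (0 : ℤ) ∈ A)
    (hα : α ≤ n + p + 1) (hαn : α ≤ n) (hαp : α ≤ p) :
    ((sigmaAtLeast A α).card : ℤ) ≥
      (n : ℤ) * ((n : ℤ) + 1) / 2 + (p : ℤ) * ((p : ℤ) + 1) / 2 + 1 :=
  stmt_7_general n p α A hneg hpos hαn hαp
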